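/- Let f: ℝⁿ → ℝ be convex, x̄ ∈ ℝⁿ with f(x̄) = 0 and 0 ∉ ∂f(x̄), and let γ₂ < d(0, ∂f(x̄)) / sup{‖y‖ : y ∈ ∂f(x̄)}. Then there exists ε > 0 such that for all x with ‖x - x̄‖ < ε, f(x) > 0, and d((x - x̄)/‖x - x̄‖, N_{f⁻¹((-∞,0])}(x̄)) < ε, one has ⟨y/‖y‖, (x - x̄)/‖x - x̄‖⟩ > γ₂ for every y ∈ ∂f(x). -/

import Mathlib

open RealInnerProductSpace

/-- The convex subdifferential of `f` at `x`. -/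
def subdiff {n : ℕ} (f : EuclideanSpace ℝ (Fin n) → ℝ) (x : EuclideanSpace ℝ (Fin n)) :
    Set (EuclideanSpace ℝ (Fin n)) :=
  {y | ∀ z, f x + ⟪y, z - x⟫ ≤ f z}

/-- The normal cone of a convex set `C` at `x`. -/
def normalCone {n : ℕ} (C : Set (EuclideanSpace ℝ (Fin n))) (x : EuclideanSpace ℝ (Fin n)) :
    Set (EuclideanSpace ℝ (Fin n)) :=
  {v | ∀ y ∈ C, ⟪v, y - x⟫ ≤ 0}

/-!
Argue by contradiction along a sequence `xₖ → x̄` with subgradients `yₖ ∈ ∂f(xₖ)` and unit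
directions `uₖ = (xₖ - x̄)/‖xₖ - x̄‖` approaching the normal cone `N`. Subgradients are locally
bounded and the graph of `∂f` is closed, so along a subsequence `yₖ → ȳ ∈ ∂f(x̄)` and `uₖ → ū ∈ N`
with `‖ū‖ = 1`. Monotonicity of `∂f` gives `⟪w, ū⟫ ≤ ⟪ȳ, ū⟫` for every `w ∈ ∂f(x̄)`, and since
`ū ∈ N`, a descent argument along the least-norm subgradient shows that some such `w` has
`⟪w, ū⟫ ≥ d(0, ∂f(x̄))`. Hence `⟪ȳ/‖ȳ‖, ū⟫ ≥ d(0, ∂f(x̄)) / sup ‖∂f(x̄)‖ > γ₂`, contradicting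
the limit of the assumed inequalities `⟪yₖ/‖yₖ‖, uₖ⟫ ≤ γ₂`.
-/

open Set Filter Topology Metric

section DirDeriv

variable {V : Type*} [AddCommGroup V] [Module ℝ V] {f : V → ℝ}

/-- For convex `f` the quotients `(f (x + t • d) - f x) / t` increase with `t > 0`, so this
infimum is the one-sided directional derivative `f'(x; d)`. -/
noncomputable def dirDeriv (f : V → ℝ) (x d : V) : ℝ :=
  ⨅ t : Ioi (0 : ℝ), (f (x + (t : ℝ) • d) - f x) / t

lemma dirDeriv_smul (x d : V) {c : ℝ} (hc : 0 < c) :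
    dirDeriv f x (c • d) = c * dirDeriv f x d := by
  rw [dirDeriv, dirDeriv, Real.mul_iInf_of_nonneg hc.le]
  refine Function.Surjective.iInf_congr (fun t => ⟨c * t, mul_pos hc t.2⟩)
    (fun s => ⟨⟨s / c, div_pos s.2 hc⟩, Subtype.ext (mul_div_cancel₀ _ hc.ne')⟩) fun t => ?_
  have ht : (t : ℝ) ≠ 0 := t.2.ne'
  simp only [mul_smul, smul_comm c (t : ℝ) d]
  field_simp

namespace ConvexOn

variable (hf : ConvexOn ℝ univ f)
include hf

lemma comp_line (x d : V) : ConvexOn ℝ univ fun t : ℝ => f (x + t • d) := by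
  simpa [Function.comp_def] using
    (hf.translate_right x).comp_linearMap (LinearMap.toSpanSingleton ℝ V d)

lemma slope_line_mono (x d : V) {s t : ℝ} (hs : 0 < s) (hst : s ≤ t) :
    (f (x + s • d) - f x) / s ≤ (f (x + t • d) - f x) / t := by
  simpa using (hf.comp_line x d).secant_mono (a := 0) trivial trivial trivial hs.ne'
    (hs.trans_le hst).ne' hst

lemma sub_le_slope_line (x d : V) {t : ℝ} (ht : 0 < t) :
    f x - f (x - d) ≤ (f (x + t • d) - f x) / t := by
  have := (hf.comp_line x d).secant_mono (a := 0) (x := -1) trivial trivial trivial (by norm_num)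
    ht.ne' (by linarith)
  simpa [← sub_eq_add_neg, neg_div_neg_eq, div_neg] using this

lemma dirDeriv_le (x d : V) {t : ℝ} (ht : 0 < t) :
    dirDeriv f x d ≤ (f (x + t • d) - f x) / t := by
  refine ciInf_le ⟨f x - f (x - d), ?_⟩ (⟨t, ht⟩ : Ioi (0 : ℝ))
  rintro _ ⟨s, rfl⟩
  exact hf.sub_le_slope_line x d s.2

lemma slope_line_midpoint_le (x a b : V) {t : ℝ} (ht : 0 < t) :
    (f (x + (t / 2) • (a + b)) - f x) / (t / 2) ≤
      (f (x + t • a) - f x) / t + (f (x + t • b) - f x) / t := by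
  have hmid : (1 / 2 : ℝ) • (x + t • a) + (1 / 2 : ℝ) • (x + t • b) = x + (t / 2) • (a + b) := by
    module
  have := hf.2 (mem_univ (x + t • a)) (mem_univ (x + t • b)) (by norm_num : (0 : ℝ) ≤ 1 / 2)
    (by norm_num : (0 : ℝ) ≤ 1 / 2) (by norm_num)
  rw [hmid, smul_eq_mul, smul_eq_mul] at this
  rw [← add_div, div_le_div_iff₀ (by positivity) ht]
  nlinarith

lemma dirDeriv_add_le (x a b : V) : dirDeriv f x (a + b) ≤ dirDeriv f x a + dirDeriv f x b := by
  have key (t₁ t₂ : Ioi (0 : ℝ)) : dirDeriv f x (a + b) ≤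
      (f (x + (t₁ : ℝ) • a) - f x) / t₁ + (f (x + (t₂ : ℝ) • b) - f x) / t₂ := by
    have ht : 0 < min (t₁ : ℝ) t₂ := lt_min t₁.2 t₂.2
    calc dirDeriv f x (a + b) ≤ _ := hf.dirDeriv_le x (a + b) (half_pos ht)
      _ ≤ _ := hf.slope_line_midpoint_le x a b ht
      _ ≤ _ := add_le_add (hf.slope_line_mono x a ht (min_le_left _ _))
                 (hf.slope_line_mono x b ht (min_le_right _ _))
  have hb (t₁ : Ioi (0 : ℝ)) : dirDeriv f x (a + b) - (f (x + (t₁ : ℝ) • a) - f x) / t₁ ≤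
      dirDeriv f x b :=
    le_ciInf fun t₂ => by linarith [key t₁ t₂]
  have ha : dirDeriv f x (a + b) - dirDeriv f x b ≤ dirDeriv f x a :=
    le_ciInf fun t₁ => by linarith [hb t₁]
  linarith

end ConvexOn

end DirDeriv

lemma LinearMap.exists_eq_le_sublinear {V : Type*} [AddCommGroup V] [Module ℝ V] (N : V → ℝ)
    (N_hom : ∀ c : ℝ, 0 < c → ∀ x, N (c • x) = c * N x) (N_add : ∀ x y, N (x + y) ≤ N x + N y)
    (e : V) : ∃ g : V →ₗ[ℝ] ℝ, g e = N e ∧ ∀ x, g x ≤ N x := by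
  have N_zero : N 0 = 0 := by
    have := N_hom 2 two_pos 0
    rw [smul_zero] at this
    linarith
  have H (c : ℝ) (hc : c • e = 0) : c • N e = 0 := by
    rcases smul_eq_zero.1 hc with rfl | rfl
    · exact zero_smul ℝ _
    · rw [N_zero, smul_zero]
  set p : V →ₗ.[ℝ] ℝ := LinearPMap.mkSpanSingleton' e (N e) H
  have hp : ∀ x : p.domain, p x ≤ N x := by
    rintro ⟨x, hx⟩
    obtain ⟨c, rfl⟩ := Submodule.mem_span_singleton.1 hx
    rw [LinearPMap.mkSpanSingleton'_apply, RingHom.id_apply, smul_eq_mul]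
    change c * N e ≤ N (c • e)
    rcases lt_trichotomy c 0 with hc | rfl | hc
    · have h₁ : N (c • e) = -c * N (-e) := by rw [← N_hom _ (neg_pos.2 hc), neg_smul_neg]
      have h₂ : 0 ≤ N e + N (-e) := by simpa [N_zero] using N_add e (-e)
      nlinarith
    · simp [N_zero]
    · exact (N_hom c hc e).ge
  obtain ⟨g, hgp, hgN⟩ := exists_extension_of_le_sublinear p N N_hom N_add hp
  exact ⟨g, (hgp ⟨e, Submodule.mem_span_singleton_self e⟩).trans
    (LinearPMap.mkSpanSingleton'_apply_self _ _ _ _), hgN⟩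

lemma exists_norm_eq_infDist_of_complete_convex {F : Type*} [NormedAddCommGroup F]
    [InnerProductSpace ℝ F] {K : Set F} (hne : K.Nonempty) (hc : IsComplete K)
    (hK : Convex ℝ K) : ∃ p ∈ K, ‖p‖ = infDist 0 K ∧ ∀ w ∈ K, ‖p‖ ^ 2 ≤ ⟪w, p⟫ := by
  obtain ⟨p, hp, hmin⟩ := exists_norm_eq_iInf_of_complete_convex hne hc hK 0
  refine ⟨p, hp, by simpa [infDist_eq_iInf, dist_eq_norm] using hmin, fun w hw => ?_⟩
  have := (norm_eq_iInf_iff_real_inner_le_zero hK hp).1 hmin w hw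
  rw [zero_sub, inner_neg_left, inner_sub_right, real_inner_self_eq_norm_sq,
    real_inner_comm] at this
  linarith

lemma lt_inner_smul_inv_norm_of_mul_norm_lt {F : Type*} [NormedAddCommGroup F]
    [InnerProductSpace ℝ F] {γ : ℝ} {y u : F} (h : γ * ‖y‖ < ⟪y, u⟫) :
    γ < ⟪‖y‖⁻¹ • y, u⟫ := by
  have hy : 0 < ‖y‖ := norm_pos_iff.2 fun hy => by simp [hy] at h
  rwa [real_inner_smul_left, lt_inv_mul_iff₀ hy, mul_comm]

lemma mem_of_tendsto_infDist {α ι : Type*} [PseudoMetricSpace α] {l : Filter ι} [l.NeBot]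
    {s : Set α} (hs : IsClosed s) (hne : s.Nonempty) {u : ι → α} {a : α}
    (hu : Tendsto u l (𝓝 a)) (hd : Tendsto (fun i => infDist (u i) s) l (𝓝 0)) : a ∈ s :=
  (hs.mem_iff_infDist_zero hne).2
    (tendsto_nhds_unique (((continuous_infDist_pt s).tendsto a).comp hu) hd)

section Subdiff

variable {n : ℕ} {f : EuclideanSpace ℝ (Fin n) → ℝ}

local notation "E" => EuclideanSpace ℝ (Fin n)

lemma isClosed_subdiff (f : E → ℝ) (x : E) : IsClosed (subdiff f x) := by
  have : subdiff f x = ⋂ z, {y | f x + ⟪y, z - x⟫ ≤ f z} := by ext; simp [subdiff]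
  rw [this]
  exact isClosed_iInter fun z =>
    isClosed_le (continuous_const.add (continuous_id.inner continuous_const)) continuous_const

lemma convex_subdiff (f : E → ℝ) (x : E) : Convex ℝ (subdiff f x) := by
  intro y₁ h₁ y₂ h₂ a b ha hb hab z
  have := add_le_add (mul_le_mul_of_nonneg_left (h₁ z) ha) (mul_le_mul_of_nonneg_left (h₂ z) hb)
  rw [inner_add_left, real_inner_smul_left, real_inner_smul_left]
  linear_combination this + (f z - f x) * hab

lemma isClosed_normalCone (C : Set E) (x : E) : IsClosed (normalCone C x) := by
  have : normalCone C x = ⋂ y ∈ C, {v | ⟪v, y - x⟫ ≤ 0} := by ext; simp [normalCone]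
  rw [this]
  exact isClosed_biInter fun y _ =>
    isClosed_le (continuous_id.inner continuous_const) continuous_const

lemma zero_mem_normalCone (C : Set E) (x : E) : (0 : E) ∈ normalCone C x := fun _ _ => by simp

lemma inner_le_inner_of_mem_subdiff {x x' w y : E} (hw : w ∈ subdiff f x')
    (hy : y ∈ subdiff f x) : ⟪w, x - x'⟫ ≤ ⟪y, x - x'⟫ := by
  have h₁ := hw x
  have h₂ := hy x'
  rw [← neg_sub x x', inner_neg_right] at h₂
  linarith

lemma add_norm_le_of_mem_subdiff {x y : E} (hy : y ∈ subdiff f x) :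
    f x + ‖y‖ ≤ f (x + ‖y‖⁻¹ • y) := by
  rcases eq_or_ne y 0 with rfl | hy0
  · simp
  have := hy (x + ‖y‖⁻¹ • y)
  rwa [add_sub_cancel_left, real_inner_smul_right, real_inner_self_eq_norm_sq, sq,
    inv_mul_cancel_left₀ (norm_ne_zero_iff.2 hy0)] at this

lemma exists_norm_subdiff_le_on_closedBall (hfc : Continuous f) (x₀ : E) (r : ℝ) :
    ∃ B, ∀ x ∈ closedBall x₀ r, ∀ y ∈ subdiff f x, ‖y‖ ≤ B := by
  obtain ⟨B₁, hB₁⟩ := (isCompact_closedBall x₀ (r + 1)).bddAbove_image hfc.continuousOn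
  obtain ⟨B₀, hB₀⟩ := (isCompact_closedBall x₀ r).bddBelow_image hfc.continuousOn
  refine ⟨B₁ - B₀, fun x hx y hy => ?_⟩
  have hstep : x + ‖y‖⁻¹ • y ∈ closedBall x₀ (r + 1) := by
    have : ‖‖y‖⁻¹ • y‖ ≤ 1 := by
      rw [norm_smul, norm_inv, norm_norm]
      exact inv_mul_le_one_of_le₀ le_rfl (norm_nonneg _)
    rw [mem_closedBall, dist_eq_norm, add_sub_right_comm]
    exact (norm_add_le _ _).trans (add_le_add (mem_closedBall_iff_norm.1 hx) this)
  linarith [add_norm_le_of_mem_subdiff hy, hB₁ (mem_image_of_mem f hstep),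
    hB₀ (mem_image_of_mem f hx)]

lemma mem_subdiff_of_tendsto {ι : Type*} {l : Filter ι} [l.NeBot] (hfc : Continuous f)
    {x y : ι → E} {x₀ y₀ : E} (hx : Tendsto x l (𝓝 x₀)) (hy : Tendsto y l (𝓝 y₀))
    (hxy : ∀ i, y i ∈ subdiff f (x i)) : y₀ ∈ subdiff f x₀ := fun z =>
  le_of_tendsto' (((hfc.tendsto x₀).comp hx).add (hy.inner (tendsto_const_nhds.sub hx)))
    fun i => hxy i z

namespace ConvexOn

variable (hf : ConvexOn ℝ univ f)
include hf

lemma exists_mem_subdiff_dirDeriv_le (x e : E) : ∃ w ∈ subdiff f x, dirDeriv f x e ≤ ⟪w, e⟫ := by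
  obtain ⟨g, hge, hgN⟩ := LinearMap.exists_eq_le_sublinear (dirDeriv f x)
    (fun c hc d => dirDeriv_smul x d hc) (hf.dirDeriv_add_le x) e
  set w := (InnerProductSpace.toDual ℝ E).symm (LinearMap.toContinuousLinearMap g)
  have hw (v : E) : ⟪w, v⟫ = g v := by simp [w]
  refine ⟨w, fun z => ?_, by rw [hw, hge]⟩
  have := (hgN (z - x)).trans (hf.dirDeriv_le x (z - x) one_pos)
  rw [one_smul, add_sub_cancel, div_one] at this
  linarith [hw (z - x)]

lemma subdiff_nonempty (x : E) : (subdiff f x).Nonempty :=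
  let ⟨w, hw, _⟩ := hf.exists_mem_subdiff_dirDeriv_le x 0
  ⟨w, hw⟩

lemma exists_lt_of_inner_neg {x d : E} (hd : ∀ w ∈ subdiff f x, ⟪w, d⟫ < 0) :
    ∃ t : ℝ, 0 < t ∧ f (x + t • d) < f x := by
  obtain ⟨w, hw, hwd⟩ := hf.exists_mem_subdiff_dirDeriv_le x d
  obtain ⟨⟨t, ht⟩, hlt⟩ := exists_lt_of_ciInf_lt (hwd.trans_lt (hd w hw))
  refine ⟨t, ht, ?_⟩
  have := (div_lt_iff₀ ht).1 hlt
  linarith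

lemma exists_mem_subdiff_infDist_le_inner {x u : E} (h0 : (0 : E) ∉ subdiff f x)
    (hu : u ∈ normalCone {z | f z ≤ f x} x) (hu1 : ‖u‖ = 1) :
    ∃ w ∈ subdiff f x, infDist 0 (subdiff f x) ≤ ⟪w, u⟫ := by
  obtain ⟨p, hp, hpm, hpw⟩ := exists_norm_eq_infDist_of_complete_convex (hf.subdiff_nonempty x)
    (isClosed_subdiff f x).isComplete (convex_subdiff f x)
  set m := infDist 0 (subdiff f x)
  have hm : 0 < m := hpm ▸ norm_pos_iff.2 fun hp0 => h0 (hp0 ▸ hp)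
  by_contra! hlt
  -- `p` minimises the norm on `∂f(x)`, so `⟪w, p⟫ ≥ m²` there and `u - m⁻¹ • p` is a descent
  -- direction; stepping along it stays in the sublevel set, which forces `⟪p, u⟫ ≥ m`.
  obtain ⟨t, ht, hft⟩ := hf.exists_lt_of_inner_neg (d := u - m⁻¹ • p) fun w hw => by
    have := hpw w hw
    rw [hpm] at this
    rw [inner_sub_right, real_inner_smul_right]
    nlinarith [hlt w hw, inv_mul_cancel₀ hm.ne']
  have := hu _ hft.le
  rw [add_sub_cancel_left, real_inner_smul_right, inner_sub_right, real_inner_smul_right,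
    real_inner_self_eq_norm_sq, hu1, one_pow, real_inner_comm] at this
  have hpu := (le_inv_mul_iff₀ hm).1 (sub_nonpos.1 (nonpos_of_mul_nonpos_right this ht))
  linarith [hlt p hp]

lemma mul_norm_lt_inner {x y u : E} (h0 : (0 : E) ∉ subdiff f x) {γ : ℝ}
    (hγ : γ < infDist 0 (subdiff f x) / sSup (norm '' subdiff f x))
    (hbdd : BddAbove (norm '' subdiff f x)) (hy : y ∈ subdiff f x)
    (hu : u ∈ normalCone {z | f z ≤ f x} x) (hu1 : ‖u‖ = 1)
    (hmax : ∀ w ∈ subdiff f x, ⟪w, u⟫ ≤ ⟪y, u⟫) : γ * ‖y‖ < ⟪y, u⟫ := by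
  obtain ⟨w, hw, hmw⟩ := hf.exists_mem_subdiff_infDist_le_inner h0 hu hu1
  have hm : 0 < infDist 0 (subdiff f x) :=
    ((isClosed_subdiff f x).notMem_iff_infDist_pos (hf.subdiff_nonempty x)).1 h0
  have hnorm_le {v : E} (hv : v ∈ subdiff f x) : ‖v‖ ≤ sSup (norm '' subdiff f x) :=
    le_csSup hbdd (mem_image_of_mem _ hv)
  have hmM : infDist 0 (subdiff f x) ≤ sSup (norm '' subdiff f x) :=
    (dist_zero_left w ▸ infDist_le_dist_of_mem hw).trans (hnorm_le hw)
  have hγM := (lt_div_iff₀ (hm.trans_le hmM)).1 hγ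
  have hγy : γ * ‖y‖ < infDist 0 (subdiff f x) := by
    rcases le_or_gt γ 0 with hγ0 | hγ0
    · nlinarith [norm_nonneg y]
    · nlinarith [hnorm_le hy]
  linarith [hmax w hw]

lemma exists_mul_norm_lt_inner_of_tendsto {x₀ : E} (h0 : (0 : E) ∉ subdiff f x₀) {γ : ℝ}
    (hγ : γ < infDist 0 (subdiff f x₀) / sSup (norm '' subdiff f x₀)) {x y : ℕ → E}
    (hx : Tendsto x atTop (𝓝 x₀)) (hfx : ∀ k, f x₀ < f (x k))
    (hN : Tendsto (fun k => infDist (‖x k - x₀‖⁻¹ • (x k - x₀)) (normalCone {z | f z ≤ f x₀} x₀))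
      atTop (𝓝 0))
    (hy : ∀ k, y k ∈ subdiff f (x k)) :
    ∃ k, γ * ‖y k‖ < ⟪y k, ‖x k - x₀‖⁻¹ • (x k - x₀)⟫ := by
  have hfc : Continuous f := continuousOn_univ.1 (hf.continuousOn isOpen_univ)
  obtain ⟨B, hB⟩ := exists_norm_subdiff_le_on_closedBall hfc x₀ 1
  set u : ℕ → E := fun k => ‖x k - x₀‖⁻¹ • (x k - x₀)
  have hmem : ∀ᶠ k in atTop, (y k, u k) ∈ closedBall 0 B ×ˢ sphere 0 1 :=
    (hx.eventually (closedBall_mem_nhds x₀ one_pos)).mono fun k hk =>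
      ⟨mem_closedBall_zero_iff.2 (hB _ hk _ (hy k)), mem_sphere_zero_iff_norm.2
        (norm_smul_inv_norm (sub_ne_zero.2 fun h => (hfx k).ne (by rw [h]))),⟩
  obtain ⟨⟨y₀, u₀⟩, ⟨-, hu₀1⟩, φ, hφ, hlim⟩ :=
    ((isCompact_closedBall 0 B).prod (isCompact_sphere 0 1)).tendsto_subseq' hmem.frequently
  have hyl : Tendsto (y ∘ φ) atTop (𝓝 y₀) := (continuous_fst.tendsto _).comp hlim
  have hul : Tendsto (u ∘ φ) atTop (𝓝 u₀) := (continuous_snd.tendsto _).comp hlim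
  have hy₀ : y₀ ∈ subdiff f x₀ :=
    mem_subdiff_of_tendsto hfc (hx.comp hφ.tendsto_atTop) hyl fun k => hy (φ k)
  have hu₀ : u₀ ∈ normalCone {z | f z ≤ f x₀} x₀ :=
    mem_of_tendsto_infDist (isClosed_normalCone _ _) ⟨0, zero_mem_normalCone _ _⟩ hul
      (hN.comp hφ.tendsto_atTop)
  have hmax (w : E) (hw : w ∈ subdiff f x₀) : ⟪w, u₀⟫ ≤ ⟪y₀, u₀⟫ :=
    le_of_tendsto_of_tendsto' (tendsto_const_nhds.inner hul) (hyl.inner hul) fun k => by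
      simp only [Function.comp_apply, u, real_inner_smul_right]
      exact mul_le_mul_of_nonneg_left (inner_le_inner_of_mem_subdiff hw (hy (φ k)))
        (by positivity)
  have hlt := hf.mul_norm_lt_inner h0 hγ
    ⟨B, forall_mem_image.2 (hB x₀ (mem_closedBall_self zero_le_one))⟩ hy₀ hu₀
    (mem_sphere_zero_iff_norm.1 hu₀1) hmax
  obtain ⟨k, hk⟩ := ((tendsto_const_nhds.mul hyl.norm).eventually_lt (hyl.inner hul) hlt).exists
  exact ⟨φ k, hk⟩

end ConvexOn

end Subdiff

/-- Second intermediate inequality: subgradients at nearby points make a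
uniformly positive inner product with the (approximately normal) direction. -/
theorem intermediate_inequality_two
    {n : ℕ} (f : EuclideanSpace ℝ (Fin n) → ℝ)
    (hconv : ConvexOn ℝ Set.univ f)
    (xbar : EuclideanSpace ℝ (Fin n)) (hf0 : f xbar = 0)
    (h0 : (0:EuclideanSpace ℝ (Fin n)) ∉ subdiff f xbar)
    (γ₂ : ℝ)
    (hγ₂ : γ₂ < Metric.infDist 0 (subdiff f xbar) / sSup (norm '' subdiff f xbar)) :
    ∃ ε > (0:ℝ), ∀ x : EuclideanSpace ℝ (Fin n),
      ‖x - xbar‖ < ε → 0 < f x →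
      Metric.infDist (‖x - xbar‖⁻¹ • (x - xbar)) (normalCone {z | f z ≤ 0} xbar) < ε →
      ∀ y ∈ subdiff f x, γ₂ < ⟪‖y‖⁻¹ • y, ‖x - xbar‖⁻¹ • (x - xbar)⟫ := by
  have hC : {z | f z ≤ 0} = {z | f z ≤ f xbar} := by rw [hf0]
  by_contra! hcon
  rw [hC] at hcon
  choose x hxε hfx hxN y hy hyγ using fun k : ℕ => hcon (1 / (k + 1)) Nat.one_div_pos_of_nat
  have hε : Tendsto (fun k : ℕ => 1 / ((k : ℝ) + 1)) atTop (𝓝 0) :=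
    tendsto_one_div_add_atTop_nhds_zero_nat
  obtain ⟨k, hk⟩ := hconv.exists_mul_norm_lt_inner_of_tendsto h0 hγ₂
    (tendsto_iff_norm_sub_tendsto_zero.2 (squeeze_zero (fun _ => norm_nonneg _)
      (fun k => (hxε k).le) hε))
    (fun k => hf0 ▸ hfx k) (squeeze_zero (fun _ => infDist_nonneg) (fun k => (hxN k).le) hε) hy
  exact (hyγ k).not_gt (lt_inner_smul_inv_norm_of_mul_norm_lt hk)
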